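/- arXiv:1810.00616 — 2 statements merged into one kernel-verified Lean document; each statement's English description precedes it below -/
import Mathlib

section
/- Define c(m,n,k,i,j) = Σ_{l=0}^{k} (-1)^l · C(i+j-k, i-l) · C(m-l, k-l) · C(n-k+l, l). Then the Weyl group (R23) symmetry holds: for all parameters in the domain, multinomial(m+n-k; i, j, m+n-k-i-j) · c(m,n,k, m-i, n-j) = (-1)^k · multinomial(m+n-k; m-i, n-j, i+j-k) · c(m,n,k,i,j), where multinomial(a+b+c; a, b, c) = (a+b+c)!/(a! b! c!). -/
open Finset

/-- Integer binomial coefficient: `C(a,b) = 0` when `b < 0` or `b > a`. -/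
def ch (a b : ℤ) : ℤ := if 0 ≤ b ∧ b ≤ a then ((a.toNat).choose b.toNat : ℤ) else 0

/-- Clebsch-Gordan sum `c_{m,n,k}(i,j)`. -/
def cg (m n k i j : ℕ) : ℤ :=
  ∑ l ∈ Finset.range (k+1),
    (-1:ℤ)^l * ch ((i:ℤ)+(j:ℤ)-(k:ℤ)) ((i:ℤ)-(l:ℤ))
      * ch ((m:ℤ)-(l:ℤ)) ((k:ℤ)-(l:ℤ)) * ch ((n:ℤ)-(k:ℤ)+(l:ℤ)) (l:ℤ)

/-- Trinomial coefficient `(a+b+c)! / (a! b! c!)`. -/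
def mult (a b c : ℕ) : ℕ := (a+b+c).factorial / (a.factorial * b.factorial * c.factorial)

lemma ch_neg {a b : ℤ} (h : b < 0) : ch a b = 0 := by
  simp [ch, not_and_of_not_left _ (not_le.mpr h)]

lemma ch_gt {a b : ℤ} (h : a < b) : ch a b = 0 := by
  simp only [ch, ite_eq_right_iff]
  rintro ⟨-, h2⟩; omega

lemma ch_nat (a b : ℕ) : ch (a : ℤ) (b : ℤ) = (a.choose b : ℤ) := by
  by_cases h : b ≤ a
  · simp [ch, h, Int.toNat_natCast]
  · rw [ch_gt (by exact_mod_cast not_le.mp h), Nat.choose_eq_zero_of_lt (by omega)]; simp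

lemma ch_pascal (a b : ℤ) (ha : 1 ≤ a) : ch a b = ch (a-1) b + ch (a-1) (b-1) := by
  rcases lt_or_ge b 0 with hb | hb
  · rw [ch_neg hb, ch_neg hb, ch_neg (by omega)]; ring
  rcases lt_or_ge a b with hab | hab
  · rw [ch_gt hab, ch_gt (by omega)]
    rw [ch_gt (show a - 1 < b - 1 by omega)]; ring
  · -- 0 ≤ b ≤ a, a ≥ 1
    obtain ⟨A, rfl⟩ : ∃ A : ℕ, a = (A : ℤ) := ⟨a.toNat, by omega⟩
    obtain ⟨B, rfl⟩ : ∃ B : ℕ, b = (B : ℤ) := ⟨b.toNat, by omega⟩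
    obtain ⟨A', rfl⟩ : ∃ A' : ℕ, A = A' + 1 := ⟨A - 1, by omega⟩
    have e1 : ((A' + 1 : ℕ) : ℤ) - 1 = ((A' : ℕ) : ℤ) := by push_cast; ring
    rcases Nat.eq_zero_or_pos B with rfl | hB
    · rw [e1, show ((0:ℕ):ℤ) - 1 = (-1 : ℤ) by norm_num,
        ch_neg (show (-1:ℤ) < 0 by omega), ch_nat, ch_nat]
      simp
    obtain ⟨B', rfl⟩ : ∃ B' : ℕ, B = B' + 1 := ⟨B - 1, by omega⟩
    have e2 : ((B' + 1 : ℕ) : ℤ) - 1 = ((B' : ℕ) : ℤ) := by push_cast; ring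
    rw [e1, e2, ch_nat, ch_nat, ch_nat]
    have := Nat.choose_succ_succ A' B'
    push_cast [this]; ring

lemma ch_symm (a : ℕ) (b : ℤ) : ch (a : ℤ) b = ch (a : ℤ) ((a : ℤ) - b) := by
  rcases lt_or_ge b 0 with hb | hb
  · rw [ch_neg hb, ch_gt (by omega)]
  rcases lt_or_ge (a : ℤ) b with hab | hab
  · rw [ch_gt hab, ch_neg (by omega)]
  · obtain ⟨B, rfl⟩ : ∃ B : ℕ, b = (B : ℤ) := ⟨b.toNat, by omega⟩
    rw [show (a : ℤ) - B = ((a - B : ℕ) : ℤ) by omega, ch_nat, ch_nat,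
      Nat.choose_symm (by exact_mod_cast hab)]

/-- auxiliary sum -/
def FF (m n k : ℕ) (i j : ℤ) : ℤ :=
  ∑ l ∈ Finset.range (k+1),
    (-1:ℤ)^l * (k.choose l : ℤ) * ch ((m:ℤ)-(l:ℤ)) i * ch ((n:ℤ)-(k:ℤ)+(l:ℤ)) j

lemma FF_P1 (m n k : ℕ) (i j : ℤ) (h : k + 1 ≤ m) :
    FF m n k i j = FF (m-1) n k i j + FF (m-1) n k (i-1) j := by
  unfold FF
  rw [← Finset.sum_add_distrib]
  refine Finset.sum_congr rfl fun l hl => ?_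
  rw [Finset.mem_range] at hl
  have hm1 : ((m - 1 : ℕ) : ℤ) = (m : ℤ) - 1 := by omega
  rw [ch_pascal ((m:ℤ)-(l:ℤ)) i (by omega), hm1]
  ring_nf

lemma FF_P2 (m n k : ℕ) (i j : ℤ) (h : k + 1 ≤ n) :
    FF m n k i j = FF m (n-1) k i j + FF m (n-1) k i (j-1) := by
  unfold FF
  rw [← Finset.sum_add_distrib]
  refine Finset.sum_congr rfl fun l hl => ?_
  rw [Finset.mem_range] at hl
  have hn1 : ((n - 1 : ℕ) : ℤ) = (n : ℤ) - 1 := by omega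
  rw [ch_pascal ((n:ℤ)-(k:ℤ)+(l:ℤ)) j (by omega), hn1]
  ring_nf

lemma ch_congr {a a' b : ℤ} (h : a = a') : ch a b = ch a' b := by rw [h]

lemma FF_R1 (m n k : ℕ) (i j : ℤ) (hk : 1 ≤ k) (hm : k ≤ m) (hn : k ≤ n) :
    FF m n k i j = FF m (n-1) (k-1) i j - FF (m-1) n (k-1) i j := by
  obtain ⟨K, rfl⟩ : ∃ K, k = K + 1 := ⟨k - 1, by omega⟩
  have hm1 : ((m - 1 : ℕ) : ℤ) = (m : ℤ) - 1 := by omega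
  have hn1 : ((n - 1 : ℕ) : ℤ) = (n : ℤ) - 1 := by omega
  unfold FF
  simp only [Nat.add_sub_cancel, hm1, hn1]
  have split : ∀ l ∈ Finset.range (K + 1 + 1),
      (-1:ℤ)^l * ((K+1).choose l : ℤ) * ch ((m:ℤ)-(l:ℤ)) i * ch ((n:ℤ)-((K+1:ℕ):ℤ)+(l:ℤ)) j
      = (fun l : ℕ => (-1:ℤ)^l * (K.choose l : ℤ) * ch ((m:ℤ)-(l:ℤ)) i * ch ((n:ℤ)-((K+1:ℕ):ℤ)+(l:ℤ)) j) l
      + (fun l : ℕ => ((-1:ℤ)^l * ((K+1).choose l : ℤ) - (-1:ℤ)^l * (K.choose l : ℤ)) * ch ((m:ℤ)-(l:ℤ)) i * ch ((n:ℤ)-((K+1:ℕ):ℤ)+(l:ℤ)) j) l := by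
    intro l _
    ring
  rw [Finset.sum_congr rfl split, Finset.sum_add_distrib]
  have e1 : ∑ l ∈ Finset.range (K + 1 + 1),
      (-1:ℤ)^l * (K.choose l : ℤ) * ch ((m:ℤ)-(l:ℤ)) i * ch ((n:ℤ)-((K+1:ℕ):ℤ)+(l:ℤ)) j
      = ∑ l ∈ Finset.range (K + 1),
      (-1:ℤ)^l * (K.choose l : ℤ) * ch ((m:ℤ)-(l:ℤ)) i * ch ((n:ℤ)-1-(K:ℤ)+(l:ℤ)) j := by
    rw [Finset.sum_range_succ, Nat.choose_eq_zero_of_lt (by omega)]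
    simp only [Nat.cast_zero, mul_zero, zero_mul, mul_zero, add_zero]
    refine Finset.sum_congr rfl fun l _ => ?_
    rw [ch_congr (show (n:ℤ)-((K+1:ℕ):ℤ)+(l:ℤ) = (n:ℤ)-1-(K:ℤ)+(l:ℤ) by push_cast; ring)]
  have e2 : ∑ l ∈ Finset.range (K + 1 + 1),
      ((-1:ℤ)^l * ((K+1).choose l : ℤ) - (-1:ℤ)^l * (K.choose l : ℤ)) * ch ((m:ℤ)-(l:ℤ)) i * ch ((n:ℤ)-((K+1:ℕ):ℤ)+(l:ℤ)) j
      = - ∑ l ∈ Finset.range (K + 1),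
      (-1:ℤ)^l * (K.choose l : ℤ) * ch ((m:ℤ)-1-(l:ℤ)) i * ch ((n:ℤ)-(K:ℤ)+(l:ℤ)) j := by
    rw [Finset.sum_range_succ' _ (K+1), ← Finset.sum_neg_distrib]
    have h0 : ((-1:ℤ)^0 * ((K+1).choose 0 : ℤ) - (-1:ℤ)^0 * (K.choose 0 : ℤ)) * ch ((m:ℤ)-((0:ℕ):ℤ)) i * ch ((n:ℤ)-((K+1:ℕ):ℤ)+((0:ℕ):ℤ)) j = 0 := by
      simp
    rw [h0, add_zero]
    refine Finset.sum_congr rfl fun l _ => ?_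
    rw [Nat.choose_succ_succ K l,
      ch_congr (show (m:ℤ)-((l+1:ℕ):ℤ) = (m:ℤ)-1-(l:ℤ) by push_cast; ring),
      ch_congr (show (n:ℤ)-((K+1:ℕ):ℤ)+((l+1:ℕ):ℤ) = (n:ℤ)-(K:ℤ)+(l:ℤ) by push_cast; ring)]
    push_cast
    ring
  rw [e1, e2]
  ring

lemma FF_R2 (m n k : ℕ) (i j : ℤ) (hk : 1 ≤ k) (hm : k ≤ m) (hn : k ≤ n) :
    FF m n k i j = FF (m-1) n (k-1) (i-1) j - FF m (n-1) (k-1) i (j-1) := by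
  rw [FF_R1 m n k i j hk hm hn]
  have h1 : FF m (n-1) (k-1) i j + FF m (n-1) (k-1) i (j-1) = FF m n (k-1) i j := by
    rw [← FF_P2 m n (k-1) i j (by omega)]
  have h2 : FF (m-1) n (k-1) i j + FF (m-1) n (k-1) (i-1) j = FF m n (k-1) i j := by
    rw [← FF_P1 m n (k-1) i j (by omega)]
  linarith [h1, h2]

lemma FF_base (m n : ℕ) (i j : ℤ) :
    FF m n 0 i j = ch (m:ℤ) i * ch (n:ℤ) j := by
  unfold FF
  simp

lemma FF_core : ∀ (k m n : ℕ) (i j : ℤ), k ≤ m → k ≤ n →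
    FF m n k i j = (-1:ℤ)^k * FF m n k ((m:ℤ)-i) ((n:ℤ)-j) := by
  intro k
  induction k with
  | zero =>
    intro m n i j _ _
    rw [FF_base, FF_base, ch_symm m i, ch_symm n j]
    ring
  | succ K IH =>
    intro m n i j hm hn
    have hm1 : ((m - 1 : ℕ) : ℤ) = (m : ℤ) - 1 := by omega
    have hn1 : ((n - 1 : ℕ) : ℤ) = (n : ℤ) - 1 := by omega
    rw [FF_R2 m n (K+1) i j (by omega) hm hn, FF_R1 m n (K+1) ((m:ℤ)-i) ((n:ℤ)-j) (by omega) hm hn]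
    simp only [Nat.add_sub_cancel]
    have ih1 : FF m (n-1) K i (j-1) = (-1:ℤ)^K * FF m (n-1) K ((m:ℤ)-i) ((n:ℤ)-j) := by
      rw [IH m (n-1) i (j-1) (by omega) (by omega), hn1]
      ring_nf
    have ih2 : FF (m-1) n K (i-1) j = (-1:ℤ)^K * FF (m-1) n K ((m:ℤ)-i) ((n:ℤ)-j) := by
      rw [IH (m-1) n (i-1) j (by omega) (by omega), hm1]
      ring_nf
    have sq : (-1:ℤ)^K * (-1:ℤ)^K = 1 := by
      rw [← pow_add, ← two_mul, pow_mul]; norm_num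
    calc FF (m-1) n K (i-1) j - FF m (n-1) K i (j-1)
        = (-1:ℤ)^K * FF (m-1) n K ((m:ℤ)-i) ((n:ℤ)-j) - (-1:ℤ)^K * FF m (n-1) K ((m:ℤ)-i) ((n:ℤ)-j) := by
          rw [ih1, ih2]
      _ = (-1:ℤ)^(K+1) * (FF m (n-1) K ((m:ℤ)-i) ((n:ℤ)-j) - FF (m-1) n K ((m:ℤ)-i) ((n:ℤ)-j)) := by
          rw [pow_succ]; ring

lemma mult_dvd (a b c : ℕ) : a.factorial * b.factorial * c.factorial ∣ (a+b+c).factorial := by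
  calc a.factorial * b.factorial * c.factorial ∣ (a+b).factorial * c.factorial :=
        mul_dvd_mul_right (Nat.factorial_mul_factorial_dvd_factorial_add a b) _
    _ ∣ (a+b+c).factorial := Nat.factorial_mul_factorial_dvd_factorial_add (a+b) c

lemma mult_cast (a b c : ℕ) : (mult a b c : ℚ) =
    ((a+b+c).factorial : ℚ) / ((a.factorial : ℚ) * (b.factorial : ℚ) * (c.factorial : ℚ)) := by
  rw [mult, Nat.cast_div (mult_dvd a b c) (by positivity)]
  push_cast
  ring

lemma choose_cast (a b : ℕ) : ((a+b).choose a : ℚ) = ((a+b).factorial : ℚ) / ((a.factorial : ℚ) * (b.factorial : ℚ)) := by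
  rw [Nat.cast_choose ℚ (Nat.le_add_right a b), Nat.add_sub_cancel_left]

lemma K1nat (i j p q c l d e : ℕ) (hd : c + d = i + p) (he : l + e = j + q) :
    mult i j (p+q) * ((p+q).choose p) * ((i+p).choose c) * ((j+q).choose l)
    = mult (l+c) d e * ((l+c).choose l) * ((i+p).choose i) * ((j+q).choose j) := by
  have key : (mult i j (p+q) * ((p+q).choose p) * ((i+p).choose c) * ((j+q).choose l) : ℚ)
      = (mult (l+c) d e * ((l+c).choose l) * ((i+p).choose i) * ((j+q).choose j) : ℚ) := by
    have h1 : ((i+p).choose c : ℚ) = ((i+p).factorial : ℚ) / ((c.factorial : ℚ) * (d.factorial : ℚ)) := by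
      rw [← hd]; exact choose_cast c d
    have h2 : ((j+q).choose l : ℚ) = ((j+q).factorial : ℚ) / ((l.factorial : ℚ) * (e.factorial : ℚ)) := by
      rw [← he]; exact choose_cast l e
    have h3 : (l+c)+d+e = i+j+(p+q) := by omega
    rw [mult_cast, mult_cast, h1, h2, h3,
      show (p+q).choose p = (p+q).choose p from rfl, choose_cast p q,
      show (i+p).choose i = (i+p).choose i from rfl, choose_cast i p,
      show (j+q).choose j = (j+q).choose j from rfl, choose_cast j q,
      show (l+c).choose l = (l+c).choose l from rfl, choose_cast l c]
    have f0 : ∀ x : ℕ, ((x.factorial : ℚ)) ≠ 0 := fun x => by positivity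
    field_simp
  exact_mod_cast key

lemma ch_congr2 {a a' b b' : ℤ} (h1 : a = a') (h2 : b = b') : ch a b = ch a' b' := by
  rw [h1, h2]

lemma K1 (m n k i j l : ℕ) (hl : l ≤ k) (hkm : k ≤ m) (hkn : k ≤ n)
    (him : i ≤ m) (hjn : j ≤ n) (hk : k ≤ i + j) (hub : i + j + k ≤ m + n) :
    (mult i j (m+n-k-i-j) : ℤ) * (ch ((m:ℤ)+(n:ℤ)-(k:ℤ)-(i:ℤ)-(j:ℤ)) ((m:ℤ)-(i:ℤ)-(l:ℤ))
      * ch ((m:ℤ)-(l:ℤ)) ((k:ℤ)-(l:ℤ)) * ch ((n:ℤ)-(k:ℤ)+(l:ℤ)) (l:ℤ))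
    = (mult k (m-k) (n-k) : ℤ) * ((k.choose l : ℤ) * ch ((m:ℤ)-(l:ℤ)) (i:ℤ)
      * ch ((n:ℤ)-(k:ℤ)+(l:ℤ)) (j:ℤ)) := by
  by_cases hA : i + l ≤ m
  · by_cases hB : j + k ≤ n + l
    · -- main case: everything in range
      obtain ⟨p, hp⟩ := Nat.le.dest hA
      obtain ⟨c, hc⟩ := Nat.le.dest hl
      obtain ⟨d, hdk⟩ := Nat.le.dest hkm
      obtain ⟨e, hek⟩ := Nat.le.dest hkn
      obtain ⟨q, hq⟩ := Nat.le.dest hB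
      rw [ch_congr2 (show (m:ℤ)+(n:ℤ)-(k:ℤ)-(i:ℤ)-(j:ℤ) = ((p+q : ℕ) : ℤ) by omega)
            (show (m:ℤ)-(i:ℤ)-(l:ℤ) = ((p : ℕ) : ℤ) by omega),
          ch_congr2 (show (m:ℤ)-(l:ℤ) = ((i+p : ℕ) : ℤ) by omega)
            (show (k:ℤ)-(l:ℤ) = ((c : ℕ) : ℤ) by omega),
          ch_congr2 (show (n:ℤ)-(k:ℤ)+(l:ℤ) = ((j+q : ℕ) : ℤ) by omega) (rfl : (l:ℤ) = (l:ℤ)),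
          ch_congr2 (show (m:ℤ)-(l:ℤ) = ((i+p : ℕ) : ℤ) by omega) (rfl : (i:ℤ) = (i:ℤ)),
          ch_congr2 (show (n:ℤ)-(k:ℤ)+(l:ℤ) = ((j+q : ℕ) : ℤ) by omega) (rfl : (j:ℤ) = (j:ℤ)),
          ch_nat, ch_nat, ch_nat, ch_nat, ch_nat,
          show m + n - k - i - j = p + q by omega, show m - k = d by omega,
          show n - k = e by omega, show k = l + c from by omega]
      have H := K1nat i j p q c l d e (by omega) (by omega)
      have H' : ((mult i j (p+q) * ((p+q).choose p) * ((i+p).choose c) * ((j+q).choose l) : ℕ) : ℤ)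
          = ((mult (l+c) d e * ((l+c).choose l) * ((i+p).choose i) * ((j+q).choose j) : ℕ) : ℤ) := by
        exact_mod_cast H
      push_cast at H'
      linear_combination H'
    · -- j + k > n + l : both sides vanish
      rw [ch_gt (show (m:ℤ)+(n:ℤ)-(k:ℤ)-(i:ℤ)-(j:ℤ) < (m:ℤ)-(i:ℤ)-(l:ℤ) by omega),
        ch_gt (show (n:ℤ)-(k:ℤ)+(l:ℤ) < (j:ℤ) by omega)]
      ring
  · -- i + l > m : both sides vanish
    rw [ch_neg (show (m:ℤ)-(i:ℤ)-(l:ℤ) < 0 by omega),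
      ch_gt (show (m:ℤ)-(l:ℤ) < (i:ℤ) by omega)]
    ring


theorem stmt_4 (m n k i j : ℕ) (hkm : k ≤ m) (hkn : k ≤ n) (him : i ≤ m) (hjn : j ≤ n)
    (hk : k ≤ i + j) (hub : i + j ≤ m + n - k) :
    (mult i j (m + n - k - i - j) : ℤ) * cg m n k (m - i) (n - j)
      = (-1:ℤ)^k * (mult (m - i) (n - j) (i + j - k) : ℤ) * cg m n k i j := by
  have hub' : i + j + k ≤ m + n := by omega
  have step1 : (mult i j (m+n-k-i-j) : ℤ) * cg m n k (m-i) (n-j)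
      = (mult k (m-k) (n-k) : ℤ) * FF m n k (i:ℤ) (j:ℤ) := by
    unfold cg FF
    rw [Finset.mul_sum, Finset.mul_sum]
    refine Finset.sum_congr rfl fun l hl => ?_
    rw [Finset.mem_range] at hl
    rw [ch_congr2 (show ((m-i : ℕ):ℤ) + ((n-j : ℕ):ℤ) - (k:ℤ) = (m:ℤ)+(n:ℤ)-(k:ℤ)-(i:ℤ)-(j:ℤ) by omega)
      (show ((m-i : ℕ):ℤ) - (l:ℤ) = (m:ℤ)-(i:ℤ)-(l:ℤ) by omega)]
    linear_combination ((-1:ℤ)^l) * K1 m n k i j l (by omega) hkm hkn him hjn hk hub'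
  have step2 : (mult (m-i) (n-j) (i+j-k) : ℤ) * cg m n k i j
      = (mult k (m-k) (n-k) : ℤ) * FF m n k ((m:ℤ)-(i:ℤ)) ((n:ℤ)-(j:ℤ)) := by
    unfold cg FF
    rw [Finset.mul_sum, Finset.mul_sum]
    refine Finset.sum_congr rfl fun l hl => ?_
    rw [Finset.mem_range] at hl
    have H := K1 m n k (m-i) (n-j) l (by omega) hkm hkn (by omega) (by omega) (by omega) (by omega)
    rw [show m+n-k-(m-i)-(n-j) = i+j-k from by omega] at H
    rw [ch_congr2 (show (i:ℤ)+(j:ℤ)-(k:ℤ) = (m:ℤ)+(n:ℤ)-(k:ℤ)-((m-i:ℕ):ℤ)-((n-j:ℕ):ℤ) by omega)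
        (show (i:ℤ)-(l:ℤ) = (m:ℤ)-((m-i:ℕ):ℤ)-(l:ℤ) by omega),
      ch_congr2 (rfl : (m:ℤ)-(l:ℤ) = (m:ℤ)-(l:ℤ)) (show (m:ℤ)-(i:ℤ) = ((m-i:ℕ):ℤ) by omega),
      ch_congr2 (rfl : (n:ℤ)-(k:ℤ)+(l:ℤ) = (n:ℤ)-(k:ℤ)+(l:ℤ)) (show (n:ℤ)-(j:ℤ) = ((n-j:ℕ):ℤ) by omega)]
    linear_combination ((-1:ℤ)^l) * H
  rw [step1, FF_core k m n (i:ℤ) (j:ℤ) hkm hkn]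
  linear_combination (-(-1:ℤ)^k) * step2
end

section
/- Define c(m,n,k,i,j) = Σ_{l=0}^{k} (-1)^l · C(i+j-k, i-l) · C(m-l, k-l) · C(n-k+l, l). Suppose k > 0, n ≥ k, and n + k is odd. Then for every nonnegative integer j with (n+k-2j, j) in the domain for parameters (2k, n, k), one has c(2k, n, k, n+k-2j, j) = 0. -/
open Finset

/-!
Put `A = n - j`, `i = n + k - 2j` and `d = 2k - i`. Up to vanishing terms, the sum defining
`c(2k, n, k, i, j)` is `∑_{l+r=i} (-1)^l C(n-k+l, l) C(A, r) C(r+d, k)`. Expanding `C(r+d, k)` by Vandermonde and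
summing over `l` first, `(-1)^l C(n-k+l, l) = C(-(n-k)-1, l)` (upper negation) turns the inner
sum into a Vandermonde convolution, which evaluates to `(-1)^(i-a) C(A, a) C(A, i-a)`.
The remaining sum `∑_{a+b=k} C(d, b) (-1)^(i-a) C(A, a) C(A, i-a)` changes sign under
`(a, b) ↦ (i-a, d-b)` because `i` is odd, so it vanishes.
-/

theorem ch_natCast (a b : ℕ) : ch a b = a.choose b := by
  unfold ch
  split_ifs with h
  · simp
  · rw [Nat.choose_eq_zero_of_lt (by omega)]
    simp

theorem ch_of_neg (a : ℤ) {b : ℤ} (hb : b < 0) : ch a b = 0 :=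
  if_neg (by omega)

theorem cg_eq_sum_antidiagonal (m n k i j : ℕ) (hkn : k ≤ n) (hkij : k ≤ i + j) (him : i ≤ m)
    (hkm : k ≤ m) :
    cg m n k i j = ∑ p ∈ antidiagonal i, (-1 : ℤ) ^ p.1 * ((n - k + p.1).choose p.1 : ℤ) *
      (((i + j - k).choose p.2 * (p.2 + (m - i)).choose (m - k) : ℕ) : ℤ) := by
  rw [cg, Nat.sum_antidiagonal_eq_sum_range_succ_mk,
    ← sum_subset (range_subset_range.2 (by omega : min i k + 1 ≤ k + 1))
      fun l hl₁ hl₂ => ?beyond_i,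
    ← sum_subset (range_subset_range.2 (by omega : min i k + 1 ≤ i + 1))
      fun l hl₁ hl₂ => ?beyond_k]
  case beyond_i =>
    rw [ch_of_neg _ (by rw [mem_range] at hl₁ hl₂; omega)]
    simp
  case beyond_k =>
    rw [Nat.choose_eq_zero_of_lt (n := i - l + (m - i)) (k := m - k)
      (by rw [mem_range] at hl₁ hl₂; omega)]
    simp
  refine sum_congr rfl fun l hl => ?_
  rw [mem_range] at hl
  have hli : l ≤ i := by omega
  have hlk : l ≤ k := by omega
  have h₁ := ch_natCast (i + j - k) (i - l)
  have h₂ := ch_natCast (m - l) (k - l)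
  have h₃ := ch_natCast (n - k + l) l
  push_cast [hkij, hli, hlk, hkn, hlk.trans hkm] at h₁ h₂ h₃
  rw [h₁, h₂, h₃, Nat.choose_symm_of_eq_add (show m - l = k - l + (m - k) by omega),
    show i - l + (m - i) = m - l by omega]
  push_cast
  ring

theorem Int.ringChoose_neg (r : ℤ) (n : ℕ) :
    Ring.choose (-r) n = (-1) ^ n * Ring.choose (r + n - 1) n := by
  rw [Ring.choose_neg, Units.smul_def, Int.coe_negOnePow_natCast, smul_eq_mul]

theorem sum_antidiagonal_neg_one_pow_mul_choose_mul_choose (e B N : ℕ) (h : B ≤ e + N) :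
    ∑ p ∈ antidiagonal N, (-1 : ℤ) ^ p.1 * ((e + p.1).choose p.1 : ℤ) * (B.choose p.2 : ℤ) =
      (-1) ^ N * ((e + N - B).choose N : ℤ) := by
  have upper_neg (r n : ℕ) : Ring.choose (-((r : ℤ) + 1 - n)) n = (-1) ^ n * (r.choose n : ℤ) := by
    rw [Int.ringChoose_neg, sub_add_cancel, add_sub_cancel_right, Ring.choose_natCast]
  calc _ = ∑ p ∈ antidiagonal N, Ring.choose (-((e : ℤ) + 1)) p.1 * Ring.choose (B : ℤ) p.2 := by
        refine sum_congr rfl fun p _ => ?_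
        rw [Ring.choose_natCast, ← upper_neg]
        congr 3
        push_cast
        ring
    _ = Ring.choose (-((e + N - B : ℕ) + 1 - N : ℤ)) N := by
        rw [← Ring.add_choose_eq _ (Commute.all _ _)]
        congr 1
        push_cast [h]
        ring
    _ = _ := upper_neg _ _

theorem sum_antidiagonal_neg_one_pow_mul_choose_mul_choose_mul_choose (A e a c i : ℕ)
    (hac : a + c = i) (he : i + e = 2 * A) :
    ∑ p ∈ antidiagonal i,
        (-1 : ℤ) ^ p.1 * ((e + p.1).choose p.1 : ℤ) * ((A.choose p.2 * p.2.choose a : ℕ) : ℤ) =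
      (-1) ^ c * ((A.choose a * A.choose c : ℕ) : ℤ) := by
  subst hac
  rw [← sum_filter_of_ne (p := fun p => a ≤ p.2) fun p _ hp => ?vanish,
    Nat.antidiagonal_filter_le_snd_of_le (Nat.le_add_right a c), add_tsub_cancel_left, sum_map]
  case vanish =>
    contrapose! hp
    rw [Nat.choose_eq_zero_of_lt hp]
    simp
  simp only [Function.Embedding.coe_prodMap, Function.Embedding.coeFn_mk, Prod.map_fst,
    Prod.map_snd, Function.Embedding.refl_apply]
  simp_rw [Nat.choose_mul (Nat.le_add_left a _), add_tsub_cancel_right, Nat.cast_mul,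
    mul_left_comm _ ((A.choose a : ℕ) : ℤ), ← mul_sum, ← mul_assoc]
  rw [sum_antidiagonal_neg_one_pow_mul_choose_mul_choose _ _ _ (by omega)]
  rcases lt_or_ge A a with hAa | haA
  · simp [Nat.choose_eq_zero_of_lt hAa]
  · rw [show e + c - (A - a) = A by omega]
    ring

theorem neg_one_pow_sub_of_odd {i a : ℕ} (hi : Odd i) (ha : a ≤ i) :
    (-1 : ℤ) ^ (i - a) = -(-1) ^ a := by
  rw [show -(-1 : ℤ) ^ a = (-1) ^ (a + 1) by ring]
  refine neg_one_pow_congr ?_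
  rw [Nat.odd_iff] at hi
  simp only [Nat.even_iff]
  omega

theorem sum_filter_antidiagonal_choose_mul_neg_one_pow_mul_choose_mul_choose_eq_zero
    (A d k i : ℕ) (hd : i + d = 2 * k) (hi : Odd i) :
    ∑ p ∈ antidiagonal k with p.1 ≤ i ∧ p.2 ≤ d,
      (d.choose p.2 : ℤ) * ((-1) ^ (i - p.1) * ((A.choose p.1 * A.choose (i - p.1) : ℕ) : ℤ)) =
      0 := by
  refine sum_involution (fun p _ => (i - p.1, d - p.2)) (fun p hp => ?cancel) (fun p hp _ => ?ne)
    (fun p hp => ?mem) (fun p hp => ?invol) <;>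
  obtain ⟨hp, hpi, hpd⟩ := mem_filter.mp hp <;> rw [HasAntidiagonal.mem_antidiagonal] at hp
  case cancel =>
    dsimp only
    rw [Nat.sub_sub_self hpi, Nat.choose_symm hpd, neg_one_pow_sub_of_odd hi hpi,
      mul_comm (A.choose _)]
    ring
  case ne =>
    rw [Nat.odd_iff] at hi
    simp only [ne_eq, Prod.ext_iff]
    omega
  case mem =>
    simp only [mem_filter, HasAntidiagonal.mem_antidiagonal]
    omega
  case invol =>
    simp only [Nat.sub_sub_self hpi, Nat.sub_sub_self hpd]

theorem sum_antidiagonal_neg_one_pow_mul_choose_mul_choose_mul_add_choose_eq_zero (A d e k i : ℕ)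
    (hd : i + d = 2 * k) (he : i + e = 2 * A) (hi : Odd i) :
    ∑ p ∈ antidiagonal i,
      (-1 : ℤ) ^ p.1 * ((e + p.1).choose p.1 : ℤ) * ((A.choose p.2 * (p.2 + d).choose k : ℕ) : ℤ) =
      0 := by
  calc _ = ∑ q ∈ antidiagonal k, (d.choose q.2 : ℤ) * ∑ p ∈ antidiagonal i,
        (-1) ^ p.1 * ((e + p.1).choose p.1 : ℤ) * ((A.choose p.2 * p.2.choose q.1 : ℕ) : ℤ) := by
        simp_rw [Nat.add_choose_eq, mul_sum, Nat.cast_sum, mul_sum]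
        rw [sum_comm]
        refine sum_congr rfl fun q _ => sum_congr rfl fun p _ => ?_
        push_cast
        ring
    _ = ∑ q ∈ antidiagonal k with q.1 ≤ i ∧ q.2 ≤ d,
        d.choose q.2 * ((-1) ^ (i - q.1) * ((A.choose q.1 * A.choose (i - q.1) : ℕ) : ℤ)) := by
        rw [← sum_filter_of_ne (p := fun q : ℕ × ℕ => q.1 ≤ i ∧ q.2 ≤ d)
          fun q _ hq => ?support]
        case support =>
          contrapose! hq
          by_cases hqi : q.1 ≤ i
          · rw [Nat.choose_eq_zero_of_lt (hq hqi), Nat.cast_zero, zero_mul]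
          · refine mul_eq_zero_of_right _ (sum_eq_zero fun p hp => ?_)
            rw [HasAntidiagonal.mem_antidiagonal] at hp
            rw [Nat.choose_eq_zero_of_lt (n := p.2) (by omega)]
            simp
        refine sum_congr rfl fun q hq => ?_
        rw [sum_antidiagonal_neg_one_pow_mul_choose_mul_choose_mul_choose A e q.1 (i - q.1) i
          (by rw [mem_filter] at hq; omega) he]
    _ = 0 := sum_filter_antidiagonal_choose_mul_neg_one_pow_mul_choose_mul_choose_eq_zero A d k i
      hd hi

theorem stmt_13_general (n k j : ℕ) (hkn : k ≤ n) (hodd : Odd (n + k))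
    (hjn : j ≤ n) (h1 : 2*j ≤ n + k) (h2 : n ≤ 2*j + k) :
    cg (2*k) n k (n + k - 2*j) j = 0 := by
  have hi : Odd (n + k - 2 * j) := by
    rw [Nat.odd_iff] at hodd ⊢
    omega
  rw [cg_eq_sum_antidiagonal _ _ _ _ _ hkn (by omega) (by omega) (by omega),
    show 2 * k - k = k by omega]
  exact sum_antidiagonal_neg_one_pow_mul_choose_mul_choose_mul_add_choose_eq_zero _ _ _ k _
    (by omega) (by omega) hi

theorem stmt_13 (n k j : ℕ) (hk : 0 < k) (hkn : k ≤ n) (hodd : Odd (n + k))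
    (hjn : j ≤ n) (h1 : 2*j ≤ n + k) (h2 : n ≤ 2*j + k) :
    cg (2*k) n k (n + k - 2*j) j = 0 :=
  stmt_13_general n k j hkn hodd hjn h1 h2
end
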